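/- For every integer n ≥ 2, the rank-4 quiver L_n (with b_12 = b_23 = 2cos(π/2n), b_31 = 2, b_14 = b_43 = 2cos(π(n−1)/2n), b_24 = 0) is not mutation-equivalent to the rank-4 quiver M_n (with b_12 = b_23 = 2cos(π/2n), b_31 = 2, b_24 = 2cos(π(n−1)/2n), b_14 = b_34 = 0). -/

import Mathlib

/-!
Mutation of a skew-symmetric matrix is a congruence `B ↦ E * B * Eᵀ` with `det E = -1`, so the
determinant is invariant under mutation, and also under simultaneous permutation of the indices.
A skew-symmetric `4 × 4` matrix has determinant `(b₁₂ b₃₄ - b₁₃ b₂₄ + b₁₄ b₂₃)²`, the square of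
its Pfaffian. For `L n` the Pfaffian vanishes, while for `M n` it is `2 b₂₄ = 4 cos (π(n-1)/2n)`,
which is nonzero.
-/

open Real

noncomputable section

namespace RealQuiver

variable {n : ℕ}

/-- Mutation of a real quiver (a skew-symmetric real matrix) at vertex `k`. -/
def mutate (B : Matrix (Fin n) (Fin n) ℝ) (k : Fin n) : Matrix (Fin n) (Fin n) ℝ :=
  fun i j => if i = k ∨ j = k then -B i j
    else B i j + (|B i k| * B k j + B i k * |B k j|) / 2

/-- One mutation step. -/
def MutStep (B C : Matrix (Fin n) (Fin n) ℝ) : Prop := ∃ k, C = mutate B k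

/-- `C` is obtained from `B` by a finite sequence of mutations. -/
def Reachable (B C : Matrix (Fin n) (Fin n) ℝ) : Prop :=
  Relation.ReflTransGen MutStep B C

/-- `B` is mutation-finite. -/
def MutationFinite (B : Matrix (Fin n) (Fin n) ℝ) : Prop :=
  {C | Reachable B C}.Finite

/-- Simultaneous permutation of the indices of `B`. -/
def permute (B : Matrix (Fin n) (Fin n) ℝ) (σ : Equiv.Perm (Fin n)) :
    Matrix (Fin n) (Fin n) ℝ := fun i j => B (σ i) (σ j)

/-- Mutation-equivalence: a finite sequence of mutations followed by a
simultaneous permutation of the indices. -/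
def MutEquiv (B C : Matrix (Fin n) (Fin n) ℝ) : Prop :=
  ∃ C' σ, Reachable B C' ∧ C = permute C' σ

/-- The underlying (undirected) graph of a quiver. -/
def toGraph (B : Matrix (Fin n) (Fin n) ℝ) : SimpleGraph (Fin n) where
  Adj i j := i ≠ j ∧ (B i j ≠ 0 ∨ B j i ≠ 0)
  symm := ⟨fun i j h => ⟨h.1.symm, h.2.symm⟩⟩
  loopless := ⟨fun i h => h.1 rfl⟩

/-- Connectedness of a quiver. -/
def Connected (B : Matrix (Fin n) (Fin n) ℝ) : Prop := (toGraph B).Connected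

def IsSkewSymmetric (B : Matrix (Fin n) (Fin n) ℝ) : Prop :=
  ∀ i j, B j i = -B i j

/-- A quiver is cyclic if its directed graph (an arrow `i → j` whenever
`B i j > 0`) contains a directed cycle. -/
def Cyclic (B : Matrix (Fin n) (Fin n) ℝ) : Prop :=
  ∃ i, Relation.TransGen (fun a b => 0 < B a b) i i

def Acyclic (B : Matrix (Fin n) (Fin n) ℝ) : Prop := ¬ Cyclic B

/-- The rank-3 cyclic quiver `(a,b,c)`: `b₁₂ = a`, `b₂₃ = b`, `b₃₁ = c`. -/
def cyclicQ (a b c : ℝ) : Matrix (Fin 3) (Fin 3) ℝ :=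
  !![0, a, -c; -a, 0, b; c, -b, 0]

/-- The rank-3 acyclic quiver `(a,b,-c)`: `b₁₂ = a`, `b₂₃ = b`, `b₁₃ = c`. -/
def acyclicQ (a b c : ℝ) : Matrix (Fin 3) (Fin 3) ℝ :=
  !![0, a, c; -a, 0, b; -c, -b, 0]

/-- `d` is the highest denominator of the mutation class of `B`. -/
def HighestDenom (B : Matrix (Fin n) (Fin n) ℝ) (d : ℕ) : Prop :=
  (∀ C, MutEquiv B C → ∀ i j, i ≠ j →
    C i j = 0 ∨ ∃ p q : ℕ, 2 * p < q ∧ q ≤ d ∧ |C i j| = 2 * Real.cos (π * p / q)) ∧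
  (∃ C, MutEquiv B C ∧ ∃ i j, ∃ p : ℕ, 0 < p ∧ 2 * p < d ∧ Nat.gcd p d = 1 ∧
    |C i j| = 2 * Real.cos (π * p / d))

/-- The rank-4 quiver `L n` (even denominator `d = 2n`):
`b₁₂ = b₂₃ = 2cos(π/2n)`, `b₃₁ = 2`, `b₁₄ = b₄₃ = 2cos(π(n-1)/2n)`, `b₂₄ = 0`. -/
def Lq (n : ℕ) : Matrix (Fin 4) (Fin 4) ℝ :=
  !![0, 2 * Real.cos (π / (2 * n)), -2, 2 * Real.cos (π * ((n : ℝ) - 1) / (2 * n));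
     -(2 * Real.cos (π / (2 * n))), 0, 2 * Real.cos (π / (2 * n)), 0;
     2, -(2 * Real.cos (π / (2 * n))), 0, -(2 * Real.cos (π * ((n : ℝ) - 1) / (2 * n)));
     -(2 * Real.cos (π * ((n : ℝ) - 1) / (2 * n))), 0, 2 * Real.cos (π * ((n : ℝ) - 1) / (2 * n)), 0]

/-- The rank-4 quiver `M n` (even denominator `d = 2n`):
`b₁₂ = b₂₃ = 2cos(π/2n)`, `b₃₁ = 2`, `b₂₄ = 2cos(π(n-1)/2n)`, `b₁₄ = b₃₄ = 0`. -/
def Mq (n : ℕ) : Matrix (Fin 4) (Fin 4) ℝ :=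
  !![0, 2 * Real.cos (π / (2 * n)), -2, 0;
     -(2 * Real.cos (π / (2 * n))), 0, 2 * Real.cos (π / (2 * n)), 2 * Real.cos (π * ((n : ℝ) - 1) / (2 * n));
     2, -(2 * Real.cos (π / (2 * n))), 0, 0;
     0, -(2 * Real.cos (π * ((n : ℝ) - 1) / (2 * n))), 0, 0]

/-- The rank-4 quiver `O n` (odd denominator `d = 2n+1`):
`b₁₂ = b₂₃ = 2cos(π/d)`, `b₃₁ = 2`, `b₁₄ = b₂₄ = b₄₃ = 2cos(πn/d)`. -/
def Oq (n : ℕ) : Matrix (Fin 4) (Fin 4) ℝ :=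
  !![0, 2 * Real.cos (π / (2 * n + 1)), -2, 2 * Real.cos (π * n / (2 * n + 1));
     -(2 * Real.cos (π / (2 * n + 1))), 0, 2 * Real.cos (π / (2 * n + 1)), 2 * Real.cos (π * n / (2 * n + 1));
     2, -(2 * Real.cos (π / (2 * n + 1))), 0, -(2 * Real.cos (π * n / (2 * n + 1)));
     -(2 * Real.cos (π * n / (2 * n + 1))), -(2 * Real.cos (π * n / (2 * n + 1))), 2 * Real.cos (π * n / (2 * n + 1)), 0]

open scoped Matrix

section Mutation

variable {n : ℕ}

/-- Mutation at `k` is the congruence `B ↦ E * B * Eᵀ` by this matrix `E`, the identity except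
in column `k`, which has `-1` on the diagonal and `max (-B i k) 0` in row `i ≠ k`. -/
def mutationMatrix (B : Matrix (Fin n) (Fin n) ℝ) (k : Fin n) : Matrix (Fin n) (Fin n) ℝ :=
  1 + Matrix.replicateCol Unit (fun i => if i = k then -2 else max (-B i k) 0) *
    Matrix.replicateRow Unit (Pi.single k (1 : ℝ))

lemma det_mutationMatrix (B : Matrix (Fin n) (Fin n) ℝ) (k : Fin n) :
    (mutationMatrix B k).det = -1 := by
  rw [mutationMatrix, Matrix.det_one_add_replicateCol_mul_replicateRow]
  norm_num [dotProduct_single]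

lemma IsSkewSymmetric.apply_self {B : Matrix (Fin n) (Fin n) ℝ} (hB : IsSkewSymmetric B)
    (i : Fin n) : B i i = 0 := by
  linarith [hB i i]

lemma IsSkewSymmetric.mutate {B : Matrix (Fin n) (Fin n) ℝ} (hB : IsSkewSymmetric B)
    (k : Fin n) : IsSkewSymmetric (mutate B k) := by
  intro i j
  by_cases h : i = k ∨ j = k
  · unfold RealQuiver.mutate
    rw [if_pos h, if_pos h.symm, hB i j]
  · unfold RealQuiver.mutate
    rw [if_neg h, if_neg (by tauto), hB i j, hB k j, hB i k, abs_neg, abs_neg]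
    ring

lemma mutate_eq_mul_mul_transpose {B : Matrix (Fin n) (Fin n) ℝ} (hB : IsSkewSymmetric B)
    (k : Fin n) : mutate B k = mutationMatrix B k * B * (mutationMatrix B k)ᵀ := by
  ext i j
  simp [mutationMatrix, Matrix.mul_apply, Matrix.one_apply, Pi.single_apply, add_mul, mul_add,
    ite_mul, mul_ite, Finset.sum_add_distrib, hB.apply_self]
  unfold RealQuiver.mutate
  by_cases hik : i = k <;> by_cases hjk : j = k
  · simp only [hik, hjk, or_self, ↓reduceIte, hB.apply_self, neg_zero, mul_zero, add_zero, zero_mul]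
  · simp only [hik, hjk, or_false, ↓reduceIte, hB.apply_self, zero_mul, add_zero]
    ring
  · simp only [hik, hjk, or_true, ↓reduceIte, hB.apply_self, mul_zero, add_zero]
    ring
  · have hx : max (-B i k) 0 = (|B i k| - B i k) / 2 := by
      linarith [max_zero_add_max_neg_zero_eq_abs_self (B i k),
        max_zero_sub_max_neg_zero_eq_self (B i k)]
    have hy : max (B k j) 0 = (|B k j| + B k j) / 2 := by
      linarith [max_zero_add_max_neg_zero_eq_abs_self (B k j),
        max_zero_sub_max_neg_zero_eq_self (B k j)]
    rw [if_neg (by tauto), if_neg hik, if_neg hjk, hB k j, neg_neg, hx, hy]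
    ring

lemma det_mutate {B : Matrix (Fin n) (Fin n) ℝ} (hB : IsSkewSymmetric B) (k : Fin n) :
    (mutate B k).det = B.det := by
  rw [mutate_eq_mul_mul_transpose hB, Matrix.det_mul, Matrix.det_mul, Matrix.det_transpose,
    det_mutationMatrix]
  ring

lemma Reachable.isSkewSymmetric_and_det_eq {B C : Matrix (Fin n) (Fin n) ℝ}
    (hB : IsSkewSymmetric B) (h : Reachable B C) : IsSkewSymmetric C ∧ C.det = B.det := by
  induction h with
  | refl => exact ⟨hB, rfl⟩
  | tail _ hstep ih =>
    obtain ⟨k, rfl⟩ := hstep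
    exact ⟨ih.1.mutate k, (det_mutate ih.1 k).trans ih.2⟩

lemma det_permute (B : Matrix (Fin n) (Fin n) ℝ) (σ : Equiv.Perm (Fin n)) :
    (permute B σ).det = B.det :=
  Matrix.det_submatrix_equiv_self σ B

lemma MutEquiv.det_eq {B C : Matrix (Fin n) (Fin n) ℝ} (hB : IsSkewSymmetric B)
    (h : MutEquiv B C) : C.det = B.det := by
  obtain ⟨C', σ, hreach, rfl⟩ := h
  rw [det_permute, (hreach.isSkewSymmetric_and_det_eq hB).2]

end Mutation

lemma IsSkewSymmetric.det_fin_four_eq_sq {B : Matrix (Fin 4) (Fin 4) ℝ} (hB : IsSkewSymmetric B) :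
    B.det = (B 0 1 * B 2 3 - B 0 2 * B 1 3 + B 0 3 * B 1 2) ^ 2 := by
  rw [Matrix.det_succ_row_zero]
  simp [Fin.sum_univ_succ, Matrix.det_fin_three, Fin.succAbove, hB.apply_self, hB 0 1, hB 0 2,
    hB 0 3, hB 1 2, hB 1 3, hB 2 3]
  ring

lemma isSkewSymmetric_Lq (n : ℕ) : IsSkewSymmetric (Lq n) := by
  intro i j
  fin_cases i <;> fin_cases j <;> simp [Lq]

lemma det_Lq (n : ℕ) : (Lq n).det = 0 := by
  rw [(isSkewSymmetric_Lq n).det_fin_four_eq_sq]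
  simp only [Lq, Matrix.of_apply, Matrix.cons_val', Matrix.cons_val_zero, Matrix.cons_val_one,
    Matrix.cons_val, Matrix.cons_val_fin_one]
  ring

lemma isSkewSymmetric_Mq (n : ℕ) : IsSkewSymmetric (Mq n) := by
  intro i j
  fin_cases i <;> fin_cases j <;> simp [Mq]

lemma det_Mq (n : ℕ) : (Mq n).det = (4 * cos (π * ((n : ℝ) - 1) / (2 * n))) ^ 2 := by
  rw [(isSkewSymmetric_Mq n).det_fin_four_eq_sq]
  simp only [Mq, Matrix.of_apply, Matrix.cons_val', Matrix.cons_val_zero, Matrix.cons_val_one,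
    Matrix.cons_val, Matrix.cons_val_fin_one]
  ring

lemma cos_pi_mul_sub_one_div_two_mul_pos (n : ℕ) : 0 < cos (π * ((n : ℝ) - 1) / (2 * n)) := by
  rcases Nat.eq_zero_or_pos n with rfl | hn
  · simp
  have hn : (1 : ℝ) ≤ n := by exact_mod_cast hn
  apply cos_pos_of_mem_Ioo
  constructor
  · have : 0 ≤ π * ((n : ℝ) - 1) / (2 * n) := by
      apply div_nonneg <;> nlinarith [pi_pos]
    linarith [pi_pos]
  · rw [div_lt_iff₀ (by positivity)]
    nlinarith [pi_pos]

theorem Lq_not_equiv_Mq_general (n : ℕ) : ¬ MutEquiv (Lq n) (Mq n) := by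
  intro h
  have hdet := h.det_eq (isSkewSymmetric_Lq n)
  rw [det_Lq, det_Mq] at hdet
  exact (pow_pos (mul_pos four_pos (cos_pi_mul_sub_one_div_two_mul_pos n)) 2).ne' hdet

/-- The quivers `L n` and `M n` are not mutation-equivalent. -/
theorem Lq_not_equiv_Mq (n : ℕ) (hn : 2 ≤ n) : ¬ MutEquiv (Lq n) (Mq n) :=
  Lq_not_equiv_Mq_general n

end RealQuiver
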